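/- Let F : J ⥤ Cat. Suppose D₁ : (i, a) ⇝ (j, b) and D₁′ : (i′, a′) ⇝ (j′, b′) are F-decorated zig-zags related by ≈ (via a chain of cells whose boundary at the target is an identity-decorated zig-zag (j, b) ⇝ (j′, b′)), and D₂ : (j, b) ⇝ (k, c) and D₂′ : (j′, b′) ⇝ (k′, c′) are F-decorated zig-zags related by ≈ (via a chain of cells whose boundary at the source is the same identity-decorated zig-zag (j, b) ⇝ (j′, b′)). Then the concatenations D₂ ∘ D₁ : (i, a) ⇝ (k, c) and D₂′ ∘ D₁′ : (i′, a′) ⇝ (k′, c′) are related by ≈. -/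

import Mathlib

/-!
Induct along the second chain. Each of its steps is a roof of cells out of a middle stage whose
source boundary is a roof of the shared boundary zig-zag `E`; since `E` is also the target
boundary of the first chain, that chain must take a step over the same roof at the same time.
Composing horizontally the upward and the downward cells of the two chains gives a roof of
cells between consecutive concatenations.
-/

open CategoryTheory

universe u

namespace ZigZagColimit

variable {J : Type u} [Category.{u} J]

/-- An `F`-decorated zig-zag from `(i, a)` to `(j, b)`:
either a decoration of the trivial zig-zag at `i` (a single morphism `a ⟶ b` in `F.obj i`),
or a roof `l : j₁ ⟶ i`, `r : j₁ ⟶ i₁` together with a middle object `a₁ : F.obj j₁`,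
a decorating morphism `f : a ⟶ (F.map l).toFunctor.obj a₁` and a decorated zig-zag continuing from
`(i₁, (F.map r).toFunctor.obj a₁)`. -/
inductive DecZig (F : J ⥤ Cat.{u, u}) : ∀ (i : J), F.obj i → ∀ (j : J), F.obj j → Type u
  | triv {i : J} {a b : F.obj i} (f : a ⟶ b) : DecZig F i a i b
  | cons {i j₁ i₁ j : J} {a : F.obj i} {a₁ : F.obj j₁} {b : F.obj j}
      (l : j₁ ⟶ i) (r : j₁ ⟶ i₁) (f : a ⟶ (F.map l).toFunctor.obj a₁)
      (rest : DecZig F i₁ ((F.map r).toFunctor.obj a₁) j b) : DecZig F i a j b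

/-- Concatenation of decorated zig-zags: concatenate the underlying zig-zags, composing
the two adjacent decorating morphisms at the junction. -/
def DecZig.comp {F : J ⥤ Cat.{u, u}} :
    ∀ {i j k : J} {a : F.obj i} {b : F.obj j} {c : F.obj k},
      DecZig F i a j b → DecZig F j b k c → DecZig F i a k c
  | _, _, _, _, _, _, .triv f, .triv g => .triv (f ≫ g)
  | _, _, _, _, _, _, .triv f, .cons l r g rest => .cons l r (f ≫ g) rest
  | _, _, _, _, _, _, .cons l r f rest, E => .cons l r f (rest.comp E)

/-- A decorated zig-zag is identity-decorated if all decorating morphisms are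
(identities, i.e.) `eqToHom`s of the forced equalities of objects. -/
inductive DecZig.IsId (F : J ⥤ Cat.{u, u}) :
    ∀ {i : J} {a : F.obj i} {j : J} {b : F.obj j}, DecZig F i a j b → Prop
  | triv {i : J} {a b : F.obj i} (h : a = b) : DecZig.IsId F (.triv (eqToHom h))
  | cons {i j₁ i₁ j : J} {a : F.obj i} {a₁ : F.obj j₁} {b : F.obj j}
      (l : j₁ ⟶ i) (r : j₁ ⟶ i₁) (h : a = (F.map l).toFunctor.obj a₁)
      {rest : DecZig F i₁ ((F.map r).toFunctor.obj a₁) j b} (hr : DecZig.IsId F rest) :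
      DecZig.IsId F (.cons l r (eqToHom h) rest)

/-- 2-cells of the zig-zag double category `ℤF`, lying over vertical boundary morphisms
`ρi : i ⟶ i'` and `ρj : j ⟶ j'` in `J`.  They are generated by horizontal concatenation of
the two generating cell types: squares (collapsing a roof onto an object, composing the two
decorating morphisms) and roof morphisms (mapping a roof to a roof). -/
inductive Cell (F : J ⥤ Cat.{u, u}) :
    ∀ {i j i' j' : J} (ρi : i ⟶ i') (ρj : j ⟶ j') {a : F.obj i} {b : F.obj j},
      DecZig F i a j b → DecZig F i' ((F.map ρi).toFunctor.obj a) j' ((F.map ρj).toFunctor.obj b) → Prop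
  | triv {i k : J} (ρ : i ⟶ k) {a b : F.obj i} (f : a ⟶ b) :
      Cell F ρ ρ (.triv f) (.triv ((F.map ρ).toFunctor.map f))
  | squareCons {i i₁ k j₁ j j' : J} (l : j₁ ⟶ i) (r : j₁ ⟶ i₁) (ρi : i ⟶ k) (ρ₁ : i₁ ⟶ k)
      (w : l ≫ ρi = r ≫ ρ₁)
      {a : F.obj i} {a₁ : F.obj j₁} {b : F.obj j}
      (f₀ : a ⟶ (F.map l).toFunctor.obj a₁)
      (h1 : (F.map ρi).toFunctor.obj ((F.map l).toFunctor.obj a₁) = (F.map ρ₁).toFunctor.obj ((F.map r).toFunctor.obj a₁))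
      {ρj : j ⟶ j'}
      {rest : DecZig F i₁ ((F.map r).toFunctor.obj a₁) j b}
      {rest' : DecZig F k ((F.map ρ₁).toFunctor.obj ((F.map r).toFunctor.obj a₁)) j' ((F.map ρj).toFunctor.obj b)}
      (hc : Cell F ρ₁ ρj rest rest') :
      Cell F ρi ρj (.cons l r f₀ rest)
        (DecZig.comp (.triv ((F.map ρi).toFunctor.map f₀ ≫ eqToHom h1)) rest')
  | roofCons {i i' i₁ i₁' j₁ j₁' j j' : J} (l : j₁ ⟶ i) (r : j₁ ⟶ i₁)
      (l' : j₁' ⟶ i') (r' : j₁' ⟶ i₁')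
      (ρi : i ⟶ i') (ρ₁ : i₁ ⟶ i₁') (ρt : j₁ ⟶ j₁')
      (wl : l ≫ ρi = ρt ≫ l') (wr : r ≫ ρ₁ = ρt ≫ r')
      {a : F.obj i} {a₁ : F.obj j₁} {b : F.obj j}
      (f₀ : a ⟶ (F.map l).toFunctor.obj a₁)
      (h1 : (F.map ρi).toFunctor.obj ((F.map l).toFunctor.obj a₁) = (F.map l').toFunctor.obj ((F.map ρt).toFunctor.obj a₁))
      (h2 : (F.map r').toFunctor.obj ((F.map ρt).toFunctor.obj a₁) = (F.map ρ₁).toFunctor.obj ((F.map r).toFunctor.obj a₁))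
      {ρj : j ⟶ j'}
      {rest : DecZig F i₁ ((F.map r).toFunctor.obj a₁) j b}
      {rest' : DecZig F i₁' ((F.map ρ₁).toFunctor.obj ((F.map r).toFunctor.obj a₁)) j' ((F.map ρj).toFunctor.obj b)}
      (hc : Cell F ρ₁ ρj rest rest') :
      Cell F ρi ρj (.cons l r f₀ rest)
        (.cons l' r' ((F.map ρi).toFunctor.map f₀ ≫ eqToHom h1)
          (DecZig.comp (.triv (eqToHom h2)) rest'))

/-- Bundled decorated zig-zags. -/
structure DecZ (F : J ⥤ Cat.{u, u}) : Type u where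
  {i : J}
  {j : J}
  {a : F.obj i}
  {b : F.obj j}
  z : DecZig F i a j b

/-- The one-step relation on decorated zig-zags given by the 2-cells of `ℤF`. -/
def CellRel (F : J ⥤ Cat.{u, u}) (D D' : DecZ F) : Prop :=
  ∃ (ρi : D.i ⟶ D'.i) (ρj : D.j ⟶ D'.j)
    (z' : DecZig F D'.i ((F.map ρi).toFunctor.obj D.a) D'.j ((F.map ρj).toFunctor.obj D.b)),
    Cell F ρi ρj D.z z' ∧ D' = DecZ.mk z'

/-- The equivalence relation `≈` on decorated zig-zags generated by the 2-cells of `ℤF`. -/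
def Eqv (F : J ⥤ Cat.{u, u}) : DecZ F → DecZ F → Prop :=
  Relation.EqvGen (CellRel F)

/-- Pairs `(i, a)` with `a` an object of `F.obj i`. -/
structure ObjPair (F : J ⥤ Cat.{u, u}) : Type u where
  i : J
  a : F.obj i

/-- The basic relation on pairs: `(i, a) ∼ (j, (F.map u).toFunctor.obj a)` for `u : i ⟶ j`. -/
def ObjRel (F : J ⥤ Cat.{u, u}) (x y : ObjPair F) : Prop :=
  ∃ u : x.i ⟶ y.i, (F.map u).toFunctor.obj x.a = y.a


/-- A vertical chain of 2-cells of `ℤF` between decorated zig-zags, recording its two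
vertical boundary zig-zags (which are identity-decorated zig-zags between the endpoints).
A chain is an alternating sequence of roofs of cells: each step consists of a middle
decorated zig-zag with a cell pointing up to the previous stage and a cell pointing down to
the next stage, the vertical boundary legs being assembled into identity-decorated
zig-zags. -/
inductive DChain (F : J ⥤ Cat.{u, u}) :
    ∀ {i j i' j' : J} {a : F.obj i} {b : F.obj j} {a' : F.obj i'} {b' : F.obj j'},
      DecZig F i a i' a' → DecZig F j b j' b' →
      DecZig F i a j b → DecZig F i' a' j' b' → Prop
  | nil {i j : J} {a : F.obj i} {b : F.obj j} (D : DecZig F i a j b) :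
      DChain F (.triv (𝟙 a)) (.triv (𝟙 b)) D D
  | cons {m i i₁ mj j j₁ i' j' : J}
      (l : m ⟶ i) (r : m ⟶ i₁) (lj : mj ⟶ j) (rj : mj ⟶ j₁)
      {am : F.obj m} {bm : F.obj mj} {a' : F.obj i'} {b' : F.obj j'}
      {Dmid : DecZig F m am mj bm}
      {Dtop : DecZig F i ((F.map l).toFunctor.obj am) j ((F.map lj).toFunctor.obj bm)}
      {Dnext : DecZig F i₁ ((F.map r).toFunctor.obj am) j₁ ((F.map rj).toFunctor.obj bm)}
      {El : DecZig F i₁ ((F.map r).toFunctor.obj am) i' a'}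
      {Er : DecZig F j₁ ((F.map rj).toFunctor.obj bm) j' b'}
      {Dbot : DecZig F i' a' j' b'}
      (cup : Cell F l lj Dmid Dtop) (cdn : Cell F r rj Dmid Dnext)
      (rest : DChain F El Er Dnext Dbot) :
      DChain F (.cons l r (eqToHom rfl) El) (.cons lj rj (eqToHom rfl) Er) Dtop Dbot

namespace DecZig

variable {F : J ⥤ Cat.{u, u}}

theorem comp_assoc :
    ∀ {i j k m : J} {a : F.obj i} {b : F.obj j} {c : F.obj k} {d : F.obj m}
      (X : DecZig F i a j b) (Y : DecZig F j b k c) (Z : DecZig F k c m d),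
      (X.comp Y).comp Z = X.comp (Y.comp Z)
  | _, _, _, _, _, _, _, _, .triv _, .triv _, Z => by cases Z <;> simp [comp]
  | _, _, _, _, _, _, _, _, .triv _, .cons _ _ _ _, _ => rfl
  | _, _, _, _, _, _, _, _, .cons _ _ _ rest, Y, Z => by simp [comp, comp_assoc rest Y Z]

theorem triv_comp_triv_comp {i j : J} {a b c : F.obj i} {d : F.obj j}
    (g : a ⟶ b) (h : b ⟶ c) (X : DecZig F i c j d) :
    (triv g).comp ((triv h).comp X) = (triv (g ≫ h)).comp X := by
  rw [← comp_assoc]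
  rfl

end DecZig

namespace Cell

variable {F : J ⥤ Cat.{u, u}}

theorem triv_comp {i i' k k' : J} {ρ : i ⟶ i'} {ρk : k ⟶ k'} {a b : F.obj i} {c : F.obj k}
    (f : a ⟶ b) {B : DecZig F i b k c}
    {B' : DecZig F i' ((F.map ρ).toFunctor.obj b) k' ((F.map ρk).toFunctor.obj c)}
    (hB : Cell F ρ ρk B B') :
    Cell F ρ ρk ((DecZig.triv f).comp B)
      ((DecZig.triv ((F.map ρ).toFunctor.map f)).comp B') := by
  cases hB with
  | triv _ g =>
    simp only [DecZig.comp, ← Functor.map_comp]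
    exact triv _ _
  | squareCons l r _ ρ₁ w f₀ h1 hc =>
    simp only [DecZig.comp]
    rw [DecZig.triv_comp_triv_comp, ← Category.assoc, ← Functor.map_comp]
    exact squareCons l r ρ ρ₁ w (f ≫ f₀) h1 hc
  | roofCons l r l' r' _ ρ₁ ρt wl wr f₀ h1 h2 hc =>
    simp only [DecZig.comp]
    rw [← Category.assoc, ← Functor.map_comp]
    exact roofCons l r l' r' ρ ρ₁ ρt wl wr (f ≫ f₀) h1 h2 hc

theorem comp {i j k i' j' k' : J} {ρi : i ⟶ i'} {ρj : j ⟶ j'} {ρk : k ⟶ k'}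
    {a : F.obj i} {b : F.obj j} {c : F.obj k}
    {A : DecZig F i a j b} {B : DecZig F j b k c}
    {A' : DecZig F i' ((F.map ρi).toFunctor.obj a) j' ((F.map ρj).toFunctor.obj b)}
    {B' : DecZig F j' ((F.map ρj).toFunctor.obj b) k' ((F.map ρk).toFunctor.obj c)}
    (hA : Cell F ρi ρj A A') (hB : Cell F ρj ρk B B') :
    Cell F ρi ρk (A.comp B) (A'.comp B') := by
  induction hA with
  | triv _ f => exact triv_comp f hB
  | squareCons l r ρi ρ₁ w f₀ h1 _ ih =>
    simp only [DecZig.comp]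
    rw [DecZig.comp_assoc]
    exact squareCons l r ρi ρ₁ w f₀ h1 (ih hB)
  | roofCons l r l' r' ρi ρ₁ ρt wl wr f₀ h1 h2 _ ih =>
    simp only [DecZig.comp]
    rw [DecZig.comp_assoc]
    exact roofCons l r l' r' ρi ρ₁ ρt wl wr f₀ h1 h2 (ih hB)

end Cell

theorem cellRel_comp {F : J ⥤ Cat.{u, u}} {i j k i' j' k' : J}
    {ρi : i ⟶ i'} {ρj : j ⟶ j'} {ρk : k ⟶ k'} {a : F.obj i} {b : F.obj j} {c : F.obj k}
    {A : DecZig F i a j b} {B : DecZig F j b k c}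
    {A' : DecZig F i' ((F.map ρi).toFunctor.obj a) j' ((F.map ρj).toFunctor.obj b)}
    {B' : DecZig F j' ((F.map ρj).toFunctor.obj b) k' ((F.map ρk).toFunctor.obj c)}
    (hA : Cell F ρi ρj A A') (hB : Cell F ρj ρk B B') :
    CellRel F ⟨A.comp B⟩ ⟨A'.comp B'⟩ :=
  ⟨ρi, ρk, _, hA.comp hB, rfl⟩

/-- The first decoration of the right boundary is `eqToHom hx` over a free object `x` because
`cases` cannot unify an index of the form `(F.map lj).toFunctor.obj bm` with that of
`DChain.cons`. -/
theorem DChain.cases_right_cons {F : J ⥤ Cat.{u, u}} {mj j j₁ j' : J} {bm : F.obj mj}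
    {b' : F.obj j'} {lj : mj ⟶ j} {rj : mj ⟶ j₁} {x : F.obj j}
    {hx : x = (F.map lj).toFunctor.obj bm}
    {Er : DecZig F j₁ ((F.map rj).toFunctor.obj bm) j' b'}
    {i i' : J} {a : F.obj i} {a' : F.obj i'}
    {L : DecZig F i a i' a'} {D : DecZig F i a j x} {D' : DecZig F i' a' j' b'}
    (ch : DChain F L (.cons lj rj (eqToHom hx) Er) D D') {motive : Prop}
    (H : ∀ {m i₁ : J} (l : m ⟶ i) (r : m ⟶ i₁) {am : F.obj m},
        a = (F.map l).toFunctor.obj am →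
        ∀ {El : DecZig F i₁ ((F.map r).toFunctor.obj am) i' a'}
        {Dmid : DecZig F m am mj bm}
        {Dtop : DecZig F i ((F.map l).toFunctor.obj am) j ((F.map lj).toFunctor.obj bm)}
        {Dnext : DecZig F i₁ ((F.map r).toFunctor.obj am) j₁ ((F.map rj).toFunctor.obj bm)},
        HEq D Dtop → Cell F l lj Dmid Dtop → Cell F r rj Dmid Dnext →
        DChain F El Er Dnext D' → motive) : motive := by
  cases ch with
  | cons l r _ _ cup cdn rest => exact H l r rfl HEq.rfl cup cdn rest

/-- **Statement 7.** If `D₁ ≈ D₁′` via a chain of cells whose boundary at the target is an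
identity-decorated zig-zag `E : (j, b) ⇝ (j′, b′)`, and `D₂ ≈ D₂′` via a chain of cells
whose boundary at the source is the same identity-decorated zig-zag `E`, then the
concatenations `D₂ ∘ D₁` and `D₂′ ∘ D₁′` are related by `≈`. -/
theorem concat_eqv_of_chains
    {J : Type u} [Category.{u} J] (F : J ⥤ Cat.{u, u})
    {i j i' j' k k' : J}
    {a : F.obj i} {b : F.obj j} {a' : F.obj i'} {b' : F.obj j'}
    {c : F.obj k} {c' : F.obj k'}
    {E : DecZig F j b j' b'}
    {L : DecZig F i a i' a'} {R : DecZig F k c k' c'}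
    {D₁ : DecZig F i a j b} {D₁' : DecZig F i' a' j' b'}
    {D₂ : DecZig F j b k c} {D₂' : DecZig F j' b' k' c'}
    (ch₁ : DChain F L E D₁ D₁') (ch₂ : DChain F E R D₂ D₂') :
    Eqv F ⟨D₁.comp D₂⟩ ⟨D₁'.comp D₂'⟩ := by
  induction ch₂ generalizing i i' a a' L with
  | nil =>
    cases ch₁
    exact .refl _
  | cons _ _ _ _ cup₂ cdn₂ _ ih =>
    refine ch₁.cases_right_cons ?_
    intro _ _ l r _ ha _ _ _ _ hD₁ cup₁ cdn₁ rest₁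
    subst ha
    cases eq_of_heq hD₁
    exact .trans _ _ _ (.symm _ _ (.rel _ _ (cellRel_comp cup₁ cup₂)))
      (.trans _ _ _ (.rel _ _ (cellRel_comp cdn₁ cdn₂)) (ih rest₁))

end ZigZagColimit
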